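/- Let ζ, η, S̄ ∈ ℝ with ζ ≠ 0 and η ≥ 0, and suppose S̄ + 6 > 9ζ²/(η + ζ²). Set θ = √((S̄+6)(η+ζ²)/ζ² - 9)/2. Let φ : ℝ → ℝ be twice differentiable with φ(t) > 0 for all t. Then -2ζ·φ''(t)/φ(t) - (η + ζ² - 2ζ)·(φ'(t)/φ(t))² + 6ζ·φ'(t)/φ(t) - 6 = S̄ for all t ∈ ℝ if and only if there exist constants c₁, c₂ ∈ ℝ such that c₁·exp((3/2)·t)·cos(θt) + c₂·exp((3/2)·t)·sin(θt) > 0 for all t and φ(t) = (c₁·exp((3/2)·t)·cos(θt) + c₂·exp((3/2)·t)·sin(θt))^{2ζ/(η+ζ²)} for all t ∈ ℝ. -/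

import Mathlib

/-!
With `k = (η + ζ²) / (2ζ)` and `ψ = φ ^ k`, the equation `S = S̄` is equivalent to the linear
equation `ψ'' - 3ψ' + (9/4 + θ²) ψ = 0`, whose characteristic roots are `3/2 ± iθ`. Its solutions
are `e^{3t/2} (c₁ cos θt + c₂ sin θt)`, and `φ = ψ ^ (1/k)` recovers `φ` from a positive solution.
-/

open Real

theorem harmonic_eq_cos_sin {θ : ℝ} (hθ : θ ≠ 0) {f f' : ℝ → ℝ}
    (hf : ∀ t, HasDerivAt f (f' t) t) (hf' : ∀ t, HasDerivAt f' (-θ ^ 2 * f t) t) (t : ℝ) :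
    f t = f 0 * cos (θ * t) + f' 0 / θ * sin (θ * t) := by
  have hcos s : HasDerivAt (fun u => cos (θ * u)) (-sin (θ * s) * θ) s := by
    simpa using ((hasDerivAt_id s).const_mul θ).cos
  have hsin s : HasDerivAt (fun u => sin (θ * u)) (cos (θ * s) * θ) s := by
    simpa using ((hasDerivAt_id s).const_mul θ).sin
  -- the coordinates of `(f, f' / θ)` in the frame rotating with angular speed `θ` are constant
  set C₁ := fun u => f u * cos (θ * u) - f' u / θ * sin (θ * u)
  set C₂ := fun u => f u * sin (θ * u) + f' u / θ * cos (θ * u)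
  have hC₁ s : HasDerivAt C₁ 0 s :=
    (((hf s).mul (hcos s)).sub (((hf' s).div_const θ).mul (hsin s))).congr_deriv
      (by field_simp; ring)
  have hC₂ s : HasDerivAt C₂ 0 s :=
    (((hf s).mul (hsin s)).add (((hf' s).div_const θ).mul (hcos s))).congr_deriv
      (by field_simp; ring)
  have hconst {C : ℝ → ℝ} (hC : ∀ s, HasDerivAt C 0 s) : C t = C 0 :=
    is_const_of_deriv_eq_zero (fun s => (hC s).differentiableAt) (fun s => (hC s).deriv) t 0
  calc f t = C₁ t * cos (θ * t) + C₂ t * sin (θ * t) := by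
        linear_combination (-f t) * sin_sq_add_cos_sq (θ * t)
    _ = f 0 * cos (θ * t) + f' 0 / θ * sin (θ * t) := by
        rw [hconst hC₁, hconst hC₂]; simp [C₁, C₂]

theorem hasDerivAt_exp_mul_cos_add_exp_mul_sin (a θ c₁ c₂ t : ℝ) :
    HasDerivAt (fun t => c₁ * exp (a * t) * cos (θ * t) + c₂ * exp (a * t) * sin (θ * t))
      ((a * c₁ + θ * c₂) * exp (a * t) * cos (θ * t)
        + (a * c₂ - θ * c₁) * exp (a * t) * sin (θ * t)) t := by
  have hexp : HasDerivAt (fun u => exp (a * u)) (exp (a * t) * a) t := by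
    simpa using ((hasDerivAt_id t).const_mul a).exp
  have hcos : HasDerivAt (fun u => cos (θ * u)) (-sin (θ * t) * θ) t := by
    simpa using ((hasDerivAt_id t).const_mul θ).cos
  have hsin : HasDerivAt (fun u => sin (θ * u)) (cos (θ * t) * θ) t := by
    simpa using ((hasDerivAt_id t).const_mul θ).sin
  exact ((((hexp.const_mul c₁).mul hcos)).add ((hexp.const_mul c₂).mul hsin)).congr_deriv
    (by ring)

theorem deriv_exp_mul_cos_add_exp_mul_sin (a θ c₁ c₂ : ℝ) :
    deriv (fun t => c₁ * exp (a * t) * cos (θ * t) + c₂ * exp (a * t) * sin (θ * t)) =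
      fun t => (a * c₁ + θ * c₂) * exp (a * t) * cos (θ * t)
        + (a * c₂ - θ * c₁) * exp (a * t) * sin (θ * t) :=
  funext fun t => (hasDerivAt_exp_mul_cos_add_exp_mul_sin a θ c₁ c₂ t).deriv

theorem damped_ode_iff {a θ : ℝ} (hθ : θ ≠ 0) {y : ℝ → ℝ} (hy : Differentiable ℝ y)
    (hy' : Differentiable ℝ (deriv y)) :
    (∀ t, deriv (deriv y) t - 2 * a * deriv y t + (a ^ 2 + θ ^ 2) * y t = 0) ↔
      ∃ c₁ c₂ : ℝ, ∀ t, y t = c₁ * exp (a * t) * cos (θ * t) + c₂ * exp (a * t) * sin (θ * t) := by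
  constructor
  · intro hode
    -- `χ = e^{-at} y` solves `χ'' = -θ² χ`
    set χ := fun t => exp (-(a * t)) * y t
    set χ' := fun t => exp (-(a * t)) * (deriv y t - a * y t)
    have hexp t : HasDerivAt (fun u => exp (-(a * u))) (-(exp (-(a * t)) * a)) t := by
      simpa using ((hasDerivAt_id t).const_mul a).neg.exp
    have hχ t : HasDerivAt χ (χ' t) t :=
      ((hexp t).mul (hy t).hasDerivAt).congr_deriv (by simp only [χ']; ring)
    have hχ' t : HasDerivAt χ' (-θ ^ 2 * χ t) t :=
      ((hexp t).mul (((hy' t).hasDerivAt).sub ((hy t).hasDerivAt.const_mul a))).congr_deriv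
        (by simp only [χ, Pi.sub_apply]; linear_combination exp (-(a * t)) * hode t)
    refine ⟨χ 0, χ' 0 / θ, fun t => ?_⟩
    calc y t = exp (a * t) * χ t := by simp [χ, ← mul_assoc, ← exp_add]
      _ = _ := by rw [harmonic_eq_cos_sin hθ hχ hχ' t]; ring
  · rintro ⟨c₁, c₂, hy⟩
    obtain rfl : y = _ := funext hy
    intro t
    simp only [deriv_exp_mul_cos_add_exp_mul_sin]
    ring

section RpowDeriv

variable {φ : ℝ → ℝ} (k : ℝ)

theorem hasDerivAt_rpow_const_of_pos {φ' t : ℝ} (hφ : HasDerivAt φ φ' t) (hpos : 0 < φ t) :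
    HasDerivAt (fun s => φ s ^ k) (k * (φ' / φ t) * φ t ^ k) t :=
  (hφ.rpow_const (Or.inl hpos.ne')).congr_deriv <| by
    rw [rpow_sub_one hpos.ne']; ring

variable (hφ : Differentiable ℝ φ) (hpos : ∀ t, 0 < φ t)
include hφ hpos

theorem deriv_rpow_const_of_pos :
    deriv (fun s => φ s ^ k) = fun t => k * (deriv φ t / φ t) * φ t ^ k :=
  funext fun t => (hasDerivAt_rpow_const_of_pos k (hφ t).hasDerivAt (hpos t)).deriv

theorem hasDerivAt_deriv_rpow_const_of_pos (hφ' : Differentiable ℝ (deriv φ)) (t : ℝ) :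
    HasDerivAt (deriv fun s => φ s ^ k)
      (k * (deriv (deriv φ) t / φ t + (k - 1) * (deriv φ t / φ t) ^ 2) * φ t ^ k) t := by
  rw [deriv_rpow_const_of_pos k hφ hpos]
  have hφt := (hpos t).ne'
  exact ((((hφ' t).hasDerivAt.div (hφ t).hasDerivAt hφt).const_mul k).mul
    (hasDerivAt_rpow_const_of_pos k (hφ t).hasDerivAt (hpos t))).congr_deriv
    (by simp only [Pi.div_apply]; field_simp; ring)

end RpowDeriv

/-- The scalar curvature of the generalized Kasner spacetime with warping function `φ`,
for the semi-symmetric metric connection determined by `∂/∂t`. -/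
noncomputable def kasnerScalarCurvature (ζ η : ℝ) (φ : ℝ → ℝ) (t : ℝ) : ℝ :=
  -2 * ζ * deriv (deriv φ) t / φ t - (η + ζ ^ 2 - 2 * ζ) * (deriv φ t / φ t) ^ 2
    + 6 * ζ * (deriv φ t / φ t) - 6

theorem rpow_linear_ode_eq_mul_sub_kasnerScalarCurvature {ζ : ℝ} (hζ : ζ ≠ 0) (η S : ℝ)
    {φ : ℝ → ℝ} (hφ : Differentiable ℝ φ) (hφ' : Differentiable ℝ (deriv φ))
    (hpos : ∀ t, 0 < φ t) (t : ℝ) :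
    deriv (deriv fun s => φ s ^ ((η + ζ ^ 2) / (2 * ζ))) t
        - 3 * deriv (fun s => φ s ^ ((η + ζ ^ 2) / (2 * ζ))) t
        + (S + 6) * (η + ζ ^ 2) / (4 * ζ ^ 2) * φ t ^ ((η + ζ ^ 2) / (2 * ζ)) =
      (η + ζ ^ 2) / (4 * ζ ^ 2) * φ t ^ ((η + ζ ^ 2) / (2 * ζ))
        * (S - kasnerScalarCurvature ζ η φ t) := by
  rw [(hasDerivAt_deriv_rpow_const_of_pos _ hφ hpos hφ' t).deriv,
    deriv_rpow_const_of_pos _ hφ hpos, kasnerScalarCurvature]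
  have := (hpos t).ne'
  field_simp
  ring

theorem kasnerScalarCurvature_eq_iff {ζ η : ℝ} (hζ : ζ ≠ 0) (hA : η + ζ ^ 2 ≠ 0) (S : ℝ)
    {φ : ℝ → ℝ} (hφ : Differentiable ℝ φ) (hφ' : Differentiable ℝ (deriv φ))
    (hpos : ∀ t, 0 < φ t) (t : ℝ) :
    kasnerScalarCurvature ζ η φ t = S ↔
      deriv (deriv fun s => φ s ^ ((η + ζ ^ 2) / (2 * ζ))) t
        - 3 * deriv (fun s => φ s ^ ((η + ζ ^ 2) / (2 * ζ))) t
        + (S + 6) * (η + ζ ^ 2) / (4 * ζ ^ 2) * φ t ^ ((η + ζ ^ 2) / (2 * ζ)) = 0 := by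
  rw [rpow_linear_ode_eq_mul_sub_kasnerScalarCurvature hζ η S hφ hφ' hpos t,
    mul_eq_zero, sub_eq_zero, eq_comm]
  have : (η + ζ ^ 2) / (4 * ζ ^ 2) * φ t ^ ((η + ζ ^ 2) / (2 * ζ)) ≠ 0 :=
    mul_ne_zero (by positivity) (rpow_pos_of_pos (hpos t) _).ne'
  simp [this]

theorem stmt_17 (ζ η Sbar : ℝ) (hζ : ζ ≠ 0) (hη : 0 ≤ η)
    (hS : 9 * ζ ^ 2 / (η + ζ ^ 2) < Sbar + 6)
    (θ : ℝ) (hθ : θ = Real.sqrt ((Sbar + 6) * (η + ζ ^ 2) / ζ ^ 2 - 9) / 2)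
    (φ : ℝ → ℝ)
    (hφ : Differentiable ℝ φ) (hφ' : Differentiable ℝ (deriv φ))
    (hφpos : ∀ t : ℝ, 0 < φ t) :
    (∀ t : ℝ, -2 * ζ * deriv (deriv φ) t / φ t
        - (η + ζ ^ 2 - 2 * ζ) * (deriv φ t / φ t) ^ 2
        + 6 * ζ * (deriv φ t / φ t) - 6 = Sbar) ↔
    ∃ c₁ c₂ : ℝ,
      (∀ t : ℝ, 0 < c₁ * Real.exp ((3/2) * t) * Real.cos (θ * t)
        + c₂ * Real.exp ((3/2) * t) * Real.sin (θ * t)) ∧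
      ∀ t : ℝ, φ t = (c₁ * Real.exp ((3/2) * t) * Real.cos (θ * t)
        + c₂ * Real.exp ((3/2) * t) * Real.sin (θ * t)) ^ (2 * ζ / (η + ζ ^ 2)) := by
  have hA : 0 < η + ζ ^ 2 := by positivity
  have hradicand : 0 < (Sbar + 6) * (η + ζ ^ 2) / ζ ^ 2 - 9 := by
    rw [div_lt_iff₀ hA] at hS
    rw [sub_pos, lt_div_iff₀ (by positivity)]
    linarith
  have hθ0 : θ ≠ 0 := by rw [hθ]; positivity
  have hθsq : θ ^ 2 = ((Sbar + 6) * (η + ζ ^ 2) / ζ ^ 2 - 9) / 4 := by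
    rw [hθ, div_pow, sq_sqrt hradicand.le]
    norm_num
  have hcoef : (Sbar + 6) * (η + ζ ^ 2) / (4 * ζ ^ 2) = (3 / 2) ^ 2 + θ ^ 2 := by
    rw [hθsq]
    field_simp
    ring
  set k := (η + ζ ^ 2) / (2 * ζ)
  have hk : k * (2 * ζ / (η + ζ ^ 2)) = 1 := by simp only [k]; field_simp
  have hψ : Differentiable ℝ fun s => φ s ^ k := fun t =>
    (hasDerivAt_rpow_const_of_pos k (hφ t).hasDerivAt (hφpos t)).differentiableAt
  have hψ' : Differentiable ℝ (deriv fun s => φ s ^ k) := fun t =>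
    (hasDerivAt_deriv_rpow_const_of_pos k hφ hφpos hφ' t).differentiableAt
  have hlinear t : kasnerScalarCurvature ζ η φ t = Sbar ↔
      deriv (deriv fun s => φ s ^ k) t - 2 * (3 / 2) * deriv (fun s => φ s ^ k) t
        + ((3 / 2) ^ 2 + θ ^ 2) * φ t ^ k = 0 := by
    rw [kasnerScalarCurvature_eq_iff hζ hA.ne' Sbar hφ hφ' hφpos t, hcoef,
      show (2 : ℝ) * (3 / 2) = 3 by norm_num]
  refine (forall_congr' hlinear).trans ((damped_ode_iff hθ0 hψ hψ').trans ?_)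
  constructor
  · rintro ⟨c₁, c₂, hψ_eq⟩
    refine ⟨c₁, c₂, fun t => ?_, fun t => ?_⟩
    · rw [← hψ_eq t]; exact rpow_pos_of_pos (hφpos t) k
    · rw [← hψ_eq t, ← rpow_mul (hφpos t).le, hk, rpow_one]
  · rintro ⟨c₁, c₂, hpos, hφ_eq⟩
    refine ⟨c₁, c₂, fun t => ?_⟩
    rw [hφ_eq t, ← rpow_mul (hpos t).le, mul_comm _ k, hk, rpow_one]
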